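/- arXiv:2601.22646 — 4 statements merged into one kernel-verified Lean document; each statement's English description precedes it below -/
import Mathlib

section
/- Let ω be a continuous weight on a locally compact abelian group G such that ω⁻¹ vanishes at infinity. Then the map Ψ : Ĝ → L¹(G,ω)* defined by Ψ(γ) = φ_γ, where φ_γ(f) = ∫_G f(s) conj(γ(s)) ds, is uniformly continuous on Ĝ with respect to the dual norm of L¹(G,ω)*. -/
open MeasureTheory Complex Filter ComplexConjugate

/-- If `ω` is a continuous weight on a locally compact abelian group `G`
with `ω⁻¹` vanishing at infinity, then the map `Ψ : Ĝ → L¹(G,ω)*`, `Ψ(γ) = φ_γ` with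
`φ_γ(f) = ∫ f conj(γ)`, is uniformly continuous with respect to the dual norm of `L¹(G,ω)*`
(uniform continuity being expressed via the canonical uniformity of the topological group `Ĝ`:
for every `ε > 0` there is an open neighbourhood `U` of `1` in `Ĝ` such that
`γ₁/γ₂ ∈ U` implies `‖φ_{γ₁} − φ_{γ₂}‖_{L¹(G,ω)*} ≤ ε`). -/
theorem Psi_uniformly_continuous
    {G : Type*} [MeasurableSpace G] [TopologicalSpace G] [BorelSpace G]
    [AddCommGroup G] [IsTopologicalAddGroup G] [LocallyCompactSpace G] [T2Space G]
    (μ : Measure G) [μ.IsAddHaarMeasure]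
    (ω : G → ℝ) (hω1 : ∀ s, 1 ≤ ω s) (hωc : Continuous ω)
    (hωsub : ∀ s t, ω (s + t) ≤ ω s * ω t)
    (hω0 : Tendsto (fun s => (ω s)⁻¹) (cocompact G) (nhds 0)) :
    ∀ ε > (0 : ℝ), ∃ U : Set (PontryaginDual (Multiplicative G)),
      IsOpen U ∧ (1 : PontryaginDual (Multiplicative G)) ∈ U ∧
      ∀ γ₁ γ₂ : PontryaginDual (Multiplicative G), γ₁ / γ₂ ∈ U →
        ∀ f : G → ℂ, AEStronglyMeasurable f μ →
          Integrable (fun s => ‖f s‖ * ω s) μ →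
          (∫ s, ‖f s‖ * ω s ∂μ) ≤ 1 →
          ‖(∫ s, f s * conj ((γ₁ (Multiplicative.ofAdd s) : Circle) : ℂ) ∂μ) -
            ∫ s, f s * conj ((γ₂ (Multiplicative.ofAdd s) : Circle) : ℂ) ∂μ‖ ≤ ε := by
  intro ε hε
  -- compact set K outside which ω⁻¹ < ε/4
  have h4 : (0:ℝ) < ε / 4 := by linarith
  obtain ⟨K, hK, hKout⟩ : ∃ K : Set G, IsCompact K ∧ ∀ s ∉ K, (ω s)⁻¹ < ε / 4 := by
    obtain ⟨K, hK, h⟩ := (hasBasis_cocompact.eventually_iff).1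
      (hω0.eventually (eventually_lt_nhds h4))
    exact ⟨K, hK, fun s hs => h hs⟩
  -- the open set
  set K' : Set (Multiplicative G) := Multiplicative.ofAdd '' K with hK'def
  have hK' : IsCompact K' := hK.image continuous_ofAdd
  set V : Set Circle := {z : Circle | ‖(z : ℂ) - 1‖ < ε / 2} with hVdef
  have hV : IsOpen V := by
    have : Continuous fun z : Circle => ‖(z : ℂ) - 1‖ := by continuity
    exact isOpen_lt this continuous_const
  refine ⟨(fun γ : PontryaginDual (Multiplicative G) =>
      (γ : C(Multiplicative G, Circle))) ⁻¹' {g | Set.MapsTo g K' V},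
    ?_, ?_, ?_⟩
  · exact (ContinuousMonoidHom.isInducing_toContinuousMap _ _).continuous.isOpen_preimage _
      (ContinuousMap.isOpen_setOf_mapsTo hK' hV)
  · intro x hx
    have h1 : (((1 : PontryaginDual (Multiplicative G)) : C(Multiplicative G, Circle)) x
        : Circle) = 1 := rfl
    simp only [hVdef, Set.mem_setOf_eq, h1, Circle.coe_one, sub_self, norm_zero]
    linarith
  · intro γ₁ γ₂ hU f hfm hfi hf1
    -- integrability of f * conj (γ s)
    have key : ∀ γ : PontryaginDual (Multiplicative G),
        Integrable (fun s => f s * conj ((γ (Multiplicative.ofAdd s) : Circle) : ℂ)) μ := by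
      intro γ
      have hcont : Continuous fun s : G => conj ((γ (Multiplicative.ofAdd s) : Circle) : ℂ) :=
        Complex.continuous_conj.comp
          (continuous_subtype_val.comp ((map_continuous γ).comp continuous_ofAdd))
      refine hfi.mono (hfm.mul hcont.aestronglyMeasurable) (ae_of_all _ fun s => ?_)
      have : ‖f s * conj ((γ (Multiplicative.ofAdd s) : Circle) : ℂ)‖ = ‖f s‖ := by
        rw [norm_mul, RCLike.norm_conj]
        exact (congrArg (‖f s‖ * ·) (Circle.norm_coe _)).trans (mul_one _)
      rw [this, Real.norm_of_nonneg
        (mul_nonneg (norm_nonneg _) (le_trans zero_le_one (hω1 s)))]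
      nlinarith [norm_nonneg (f s), hω1 s]
    rw [← integral_sub (key γ₁) (key γ₂)]
    have hbound : ∀ s : G,
        ‖f s * conj ((γ₁ (Multiplicative.ofAdd s) : Circle) : ℂ) -
          f s * conj ((γ₂ (Multiplicative.ofAdd s) : Circle) : ℂ)‖ ≤
        ε / 2 * (‖f s‖ * ω s) := by
      intro s
      set c₁ : ℂ := ((γ₁ (Multiplicative.ofAdd s) : Circle) : ℂ)
      set c₂ : ℂ := ((γ₂ (Multiplicative.ofAdd s) : Circle) : ℂ)
      have hrw : ‖f s * conj c₁ - f s * conj c₂‖ = ‖f s‖ * ‖c₁ - c₂‖ := by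
        rw [← mul_sub, norm_mul, ← map_sub conj c₁ c₂, RCLike.norm_conj]
      rw [hrw]
      have hc2 : ‖c₂‖ = 1 := by exact Circle.norm_coe _
      have hc1 : ‖c₁‖ = 1 := by exact Circle.norm_coe _
      by_cases hs : s ∈ K
      · have hmem : ((γ₁ / γ₂) (Multiplicative.ofAdd s) : Circle) ∈ V :=
          hU ⟨Multiplicative.ofAdd s, hs, rfl⟩
        have hdiv : ‖c₁ - c₂‖ = ‖(((γ₁ / γ₂) (Multiplicative.ofAdd s) : Circle) : ℂ) - 1‖ := by
          have : (((γ₁ / γ₂) (Multiplicative.ofAdd s) : Circle) : ℂ) = c₁ / c₂ := rfl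
          rw [this]
          have hc2ne : c₂ ≠ 0 := by
            intro h; rw [h, norm_zero] at hc2; norm_num at hc2
          rw [show c₁ / c₂ - 1 = (c₁ - c₂) / c₂ by rw [sub_div, div_self hc2ne],
            norm_div, hc2, div_one]
        have h12 : ‖c₁ - c₂‖ < ε / 2 := by rw [hdiv]; exact hmem
        calc ‖f s‖ * ‖c₁ - c₂‖ ≤ ‖f s‖ * (ε / 2) :=
            mul_le_mul_of_nonneg_left h12.le (norm_nonneg _)
          _ ≤ ε / 2 * (‖f s‖ * ω s) := by
            nlinarith [mul_nonneg (mul_nonneg hε.le (norm_nonneg (f s))) (sub_nonneg.2 (hω1 s))]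
      · have h2 : ‖c₁ - c₂‖ ≤ 2 := by
          calc ‖c₁ - c₂‖ ≤ ‖c₁‖ + ‖c₂‖ := norm_sub_le _ _
          _ = 2 := by rw [hc1, hc2]; norm_num
        have hωs : ω s > 0 := lt_of_lt_of_le one_pos (hω1 s)
        have hinv : (ω s)⁻¹ < ε / 4 := hKout s hs
        have h4ω : 4 < ε * ω s := by
          have := (inv_lt_iff_one_lt_mul₀ hωs).1 hinv
          nlinarith
        calc ‖f s‖ * ‖c₁ - c₂‖ ≤ ‖f s‖ * 2 :=
            mul_le_mul_of_nonneg_left h2 (norm_nonneg _)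
          _ ≤ ε / 2 * (‖f s‖ * ω s) := by
            nlinarith [mul_nonneg (norm_nonneg (f s)) (by linarith : (0:ℝ) ≤ ε * ω s - 4)]
    calc ‖∫ s, (f s * conj ((γ₁ (Multiplicative.ofAdd s) : Circle) : ℂ) -
          f s * conj ((γ₂ (Multiplicative.ofAdd s) : Circle) : ℂ)) ∂μ‖ ≤
        ∫ s, ε / 2 * (‖f s‖ * ω s) ∂μ :=
      norm_integral_le_of_norm_le (hfi.const_mul _) (ae_of_all _ hbound)
    _ = ε / 2 * ∫ s, ‖f s‖ * ω s ∂μ := integral_const_mul _ _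
    _ ≤ ε / 2 * 1 := by nlinarith
    _ ≤ ε := by linarith
end

section
/- Let G be a locally compact abelian group and ω a continuous weight on G. Then the space ℱ = {f ∈ C_c(G) : f̂ ∈ L¹(Ĝ), Fourier inversion holds for f} is dense in the Banach space C₀(G, ω⁻¹) = {f continuous : f/ω vanishes at infinity} equipped with the norm ‖f‖_{0,ω⁻¹} = sup_{s∈G} |f(s)|/ω(s). -/
open MeasureTheory Complex Filter ComplexConjugate

/-- The `ℂ`-valued function on `G` underlying a character `γ ∈ Ĝ`. -/
noncomputable def charFun {G : Type*} [TopologicalSpace G] [AddCommGroup G]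
    (γ : PontryaginDual (Multiplicative G)) : G → ℂ :=
  fun s => ((γ (Multiplicative.ofAdd s) : Circle) : ℂ)

/-- The Fourier transform `f̂(γ) = ∫ f(s) conj(γ(s)) ds`. -/
noncomputable def FT {G : Type*} [MeasurableSpace G] [TopologicalSpace G] [AddCommGroup G]
    (μ : Measure G) (f : G → ℂ) (γ : PontryaginDual (Multiplicative G)) : ℂ :=
  ∫ s, f s * conj (charFun γ s) ∂μ

/-- The family `ℱ` (compactly supported continuous functions with
integrable Fourier transform satisfying Fourier inversion) is dense in the weighted space
`C₀(G, ω⁻¹) = {f continuous : f/ω vanishes at infinity}` for the norm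
`‖f‖_{0,ω⁻¹} = sup |f|/ω`.  (It is known — hypothesis `hdense` — that `ℱ` is dense in
`(C₀(G), ‖·‖_∞)`.) -/
theorem scrF_dense_in_weighted_C0
    {G : Type*} [MeasurableSpace G] [TopologicalSpace G] [BorelSpace G]
    [AddCommGroup G] [IsTopologicalAddGroup G] [LocallyCompactSpace G] [T2Space G]
    [MeasurableSpace (PontryaginDual (Multiplicative G))]
    [BorelSpace (PontryaginDual (Multiplicative G))]
    (μ : Measure G) [μ.IsAddHaarMeasure]
    (mγ : Measure (PontryaginDual (Multiplicative G))) [mγ.IsHaarMeasure]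
    (ω : G → ℝ) (hω1 : ∀ s, 1 ≤ ω s) (hωc : Continuous ω)
    (hωsub : ∀ s t, ω (s + t) ≤ ω s * ω t)
    (F : Set (G → ℂ))
    (hF : F = {f : G → ℂ | Continuous f ∧ HasCompactSupport f ∧
      Integrable (FT μ f) mγ ∧ ∀ s, f s = ∫ γ, FT μ f γ * charFun γ s ∂mγ})
    (hdense : ∀ h : G → ℂ, Continuous h → Tendsto h (cocompact G) (nhds 0) →
      ∀ ε > (0 : ℝ), ∃ g ∈ F, ∀ s, ‖h s - g s‖ < ε) :
    ∀ f : G → ℂ, Continuous f →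
      Tendsto (fun s => f s / (ω s : ℂ)) (cocompact G) (nhds 0) →
      ∀ ε > (0 : ℝ), ∃ g ∈ F, ∀ s, ‖f s - g s‖ / ω s < ε := by
  intro f hf hft ε hε
  have hωpos : ∀ s, (0:ℝ) < ω s := fun s => lt_of_lt_of_le one_pos (hω1 s)
  have h4 : (0:ℝ) < ε/4 := by positivity
  obtain ⟨K, hK, hKs⟩ : ∃ K : Set G, IsCompact K ∧ ∀ s ∉ K, ‖f s / (ω s : ℂ)‖ < ε/4 := by
    have := hft (Metric.ball_mem_nhds 0 h4)
    rw [Filter.mem_map, Filter.mem_cocompact] at this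
    obtain ⟨K, hK, hKs⟩ := this
    refine ⟨K, hK, fun s hs => ?_⟩
    have := hKs hs
    simpa [Metric.mem_ball, dist_eq_norm] using this
  obtain ⟨χ, hχ1, -, hχsupp, hχ01⟩ :=
    exists_continuous_one_zero_of_isCompact (X := G) hK isClosed_empty (Set.disjoint_empty K)
  set h : G → ℂ := fun s => (χ s : ℂ) * f s with hh
  have hhc : Continuous h := (Complex.continuous_ofReal.comp χ.continuous).mul hf
  have hhsupp : HasCompactSupport h := by
    apply HasCompactSupport.intro hχsupp
    intro x hx
    have : χ x = 0 := image_eq_zero_of_notMem_tsupport hx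
    simp [hh, this]
  obtain ⟨g, hgF, hg⟩ := hdense h hhc hhsupp.is_zero_at_infty (ε/2) (by positivity)
  refine ⟨g, hgF, fun s => ?_⟩
  have key1 : ‖h s - g s‖ / ω s < ε/2 :=
    lt_of_le_of_lt (div_le_self (norm_nonneg _) (hω1 s)) (hg s)
  have key2 : ‖f s - h s‖ / ω s < ε/2 := by
    by_cases hs : s ∈ K
    · have : χ s = 1 := hχ1 hs
      simp only [hh, this]
      simp
      positivity
    · have h1 : ‖f s - h s‖ = |1 - χ s| * ‖f s‖ := by
        have : f s - h s = ((1 - χ s : ℝ) : ℂ) * f s := by push_cast; ring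
        rw [this, norm_mul, Complex.norm_real, Real.norm_eq_abs]
      have h01 := hχ01 s
      have habs : |1 - χ s| ≤ 1 := by
        rw [abs_le]; constructor <;> [linarith [h01.2]; linarith [h01.1]]
      have h2 : ‖f s - h s‖ ≤ ‖f s‖ := by
        rw [h1]
        calc |1 - χ s| * ‖f s‖ ≤ 1 * ‖f s‖ :=
              mul_le_mul_of_nonneg_right habs (norm_nonneg _)
          _ = ‖f s‖ := one_mul _
      have h3 : ‖f s‖ / ω s = ‖f s / (ω s : ℂ)‖ := by
        rw [norm_div, Complex.norm_real, Real.norm_eq_abs, abs_of_pos (hωpos s)]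
      calc ‖f s - h s‖ / ω s ≤ ‖f s‖ / ω s :=
            div_le_div_of_nonneg_right h2 (hωpos s).le |>.trans_eq rfl
        _ = ‖f s / (ω s : ℂ)‖ := h3
        _ < ε/4 := hKs s hs
        _ < ε/2 := by linarith
  calc ‖f s - g s‖ / ω s ≤ (‖f s - h s‖ + ‖h s - g s‖) / ω s := by
        apply div_le_div_of_nonneg_right _ (hωpos s).le
        exact (norm_sub_le_norm_sub_add_norm_sub _ _ _)
    _ = ‖f s - h s‖ / ω s + ‖h s - g s‖ / ω s := add_div _ _ _
    _ < ε/2 + ε/2 := add_lt_add key2 key1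
    _ = ε := by ring
end

section
/- Let G be a discrete abelian group and ω a weight on G such that ω⁻¹ vanishes at infinity. Then the Beurling algebra ℓ¹(G,ω) is a BED-algebra: the Inoue–Doss ideal C⁰_BSE of its spectrum coincides with the set of Gelfand transforms of elements of ℓ¹(G,ω). (In this case ℓ¹(G,ω) is unital, so its multiplier algebra is itself and C_BSE(Ĝ_ω) = ℓ¹(G,ω)^.) -/
open Complex Filter ComplexConjugate
open scoped ENNReal

private abbrev Wchar {G : Type*} [AddCommGroup G] (ω : G → ℝ) :=
  {γ : G → ℂ // (∀ s, γ s ≠ 0) ∧ (∀ s t, γ (s + t) = γ s * γ t) ∧ ∀ s, ‖γ s‖ ≤ ω s}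

set_option linter.unreachableTactic false
set_option linter.unusedTactic false

private lemma specw_isCompact {G : Type*} [AddCommGroup G] (ω : G → ℝ) :
    IsCompact {γ : G → ℂ | (∀ s, γ s ≠ 0) ∧ (∀ s t, γ (s + t) = γ s * γ t) ∧
      ∀ s, ‖γ s‖ ≤ ω s} := by
  have hset : {γ : G → ℂ | (∀ s, γ s ≠ 0) ∧ (∀ s t, γ (s + t) = γ s * γ t) ∧
      ∀ s, ‖γ s‖ ≤ ω s} =
      {γ : G → ℂ | γ 0 = 1 ∧ (∀ s t, γ (s + t) = γ s * γ t) ∧ ∀ s, ‖γ s‖ ≤ ω s} := by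
    ext γ
    constructor
    · rintro ⟨h1, h2, h3⟩
      refine ⟨?_, h2, h3⟩
      have h00 : γ (0 + 0) = γ 0 * γ 0 := h2 0 0
      rw [add_zero] at h00
      have := h1 0
      field_simp at h00
      tauto
    · rintro ⟨h1, h2, h3⟩
      refine ⟨?_, h2, h3⟩
      intro s hs
      have : γ (s + -s) = γ s * γ (-s) := h2 s (-s)
      rw [add_neg_cancel, h1, hs, zero_mul] at this
      exact one_ne_zero this
  rw [hset]
  refine IsCompact.of_isClosed_subset
    (isCompact_pi_infinite (fun s => isCompact_closedBall (0 : ℂ) (ω s))) ?_ ?_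
  · have e1 : IsClosed {γ : G → ℂ | γ 0 = 1} :=
      isClosed_eq (continuous_apply 0) continuous_const
    have e2 : IsClosed {γ : G → ℂ | ∀ s t, γ (s + t) = γ s * γ t} := by
      have : {γ : G → ℂ | ∀ s t, γ (s + t) = γ s * γ t} =
          ⋂ s, ⋂ t, {γ : G → ℂ | γ (s + t) = γ s * γ t} := by
        ext γ; simp [Set.mem_iInter]
      rw [this]
      exact isClosed_iInter fun s => isClosed_iInter fun t =>
        isClosed_eq (continuous_apply _) ((continuous_apply s).mul (continuous_apply t))
    have e3 : IsClosed {γ : G → ℂ | ∀ s, ‖γ s‖ ≤ ω s} := by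
      have : {γ : G → ℂ | ∀ s, ‖γ s‖ ≤ ω s} = ⋂ s, {γ : G → ℂ | ‖γ s‖ ≤ ω s} := by
        ext γ; simp [Set.mem_iInter]
      rw [this]
      exact isClosed_iInter fun s =>
        isClosed_le ((continuous_apply s).norm) continuous_const
    have : {γ : G → ℂ | γ 0 = 1 ∧ (∀ s t, γ (s + t) = γ s * γ t) ∧ ∀ s, ‖γ s‖ ≤ ω s} =
        {γ : G → ℂ | γ 0 = 1} ∩ ({γ | ∀ s t, γ (s + t) = γ s * γ t} ∩ {γ | ∀ s, ‖γ s‖ ≤ ω s}) := by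
      ext γ; simp [Set.mem_inter_iff]
    rw [this]
    exact e1.inter (e2.inter e3)
  · rintro γ ⟨-, -, h3⟩ 
    intro s
    simpa [Metric.mem_closedBall, dist_eq_norm] using h3 s

set_option maxHeartbeats 1600000 in
/-- Let `G` be a discrete abelian group and `ω ≥ 1` a weight on `G` with
`ω⁻¹` vanishing at infinity.  Then `ℓ¹(G,ω)` is a BED-algebra: a function `σ` on the
spectrum `Ĝ_ω` (the `ω`-bounded generalized characters, with the topology of pointwise
convergence) belongs to the Inoue–Doss ideal `C⁰_BSE` — i.e. it is a bounded continuous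
BSE-function with `‖σ‖_{BSE,∞} = 0` — if and only if it is the Gelfand (Fourier)
transform of some `f ∈ ℓ¹(G,ω)`. -/
theorem discrete_beurling_is_BED
    {G : Type*} [AddCommGroup G]
    (ω : G → ℝ) (hω1 : ∀ s, 1 ≤ ω s)
    (hωsub : ∀ s t, ω (s + t) ≤ ω s * ω t)
    (hω0 : Tendsto (fun s => (ω s)⁻¹) Filter.cofinite (nhds 0)) :
    ∀ σ : {γ : G → ℂ // (∀ s, γ s ≠ 0) ∧ (∀ s t, γ (s + t) = γ s * γ t) ∧
        ∀ s, ‖γ s‖ ≤ ω s} → ℂ,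
      (Continuous σ ∧ (∃ M : ℝ, ∀ γ, ‖σ γ‖ ≤ M) ∧
        -- σ is a BSE-function
        (∃ C : ℝ, ∀ (n : ℕ) (c : Fin n → ℂ)
          (γ : Fin n → {γ : G → ℂ // (∀ s, γ s ≠ 0) ∧ (∀ s t, γ (s + t) = γ s * γ t) ∧
            ∀ s, ‖γ s‖ ≤ ω s}),
          ∀ B : ℝ,
            (∀ h : G → ℂ, Summable (fun s => ‖h s‖ * ω s) →
              (∑' s, ‖h s‖ * ω s) ≤ 1 →
              ‖∑ i, c i * ∑' s, h s * conj ((γ i).1 s)‖ ≤ B) →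
            ‖∑ i, c i * σ (γ i)‖ ≤ C * B) ∧
        -- ‖σ‖_{BSE,∞} = 0
        (∀ ε > (0 : ℝ), ∃ K : Set {γ : G → ℂ // (∀ s, γ s ≠ 0) ∧
            (∀ s t, γ (s + t) = γ s * γ t) ∧ ∀ s, ‖γ s‖ ≤ ω s}, IsCompact K ∧
          ∀ (n : ℕ) (c : Fin n → ℂ)
            (γ : Fin n → {γ : G → ℂ // (∀ s, γ s ≠ 0) ∧
              (∀ s t, γ (s + t) = γ s * γ t) ∧ ∀ s, ‖γ s‖ ≤ ω s}),
            (∀ i, γ i ∉ K) →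
            (∀ h : G → ℂ, Summable (fun s => ‖h s‖ * ω s) →
              (∑' s, ‖h s‖ * ω s) ≤ 1 →
              ‖∑ i, c i * ∑' s, h s * conj ((γ i).1 s)‖ ≤ 1) →
            ‖∑ i, c i * σ (γ i)‖ ≤ ε))
      ↔ ∃ f : G → ℂ, Summable (fun s => ‖f s‖ * ω s) ∧
          ∀ γ, σ γ = ∑' s, f s * conj (γ.1 s) := by
  classical
  intro σ
  refine ⟨?_, ?_⟩
  · rintro ⟨hcont, -, ⟨C₀, hC⟩, -⟩
    classical
    haveI : Fact ((1:ℝ≥0∞) ≤ ∞) := ⟨le_top⟩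
    set C : ℝ := max C₀ 0 with hCdef
    have hCnn : 0 ≤ C := le_max_right _ _
    have hωpos : ∀ s, (0:ℝ) < ω s := fun s => lt_of_lt_of_le one_pos (hω1 s)
    have hωC : ∀ s, (ω s : ℂ) ≠ 0 := fun s => by
      simpa using Complex.ofReal_ne_zero.mpr (ne_of_gt (hωpos s))
    -- the lp space
    set E := lp (fun _ : G => ℂ) ∞ with hE
    -- the map γ ↦ conj γ / ω  as an element of E
    have hkmem : ∀ γ : Wchar ω, Memℓp (fun s => conj (γ.1 s) / (ω s : ℂ)) ∞ := by
      intro γ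
      apply memℓp_infty
      refine ⟨1, ?_⟩
      rintro r ⟨s, rfl⟩
      simp only [norm_div, Complex.norm_real, Real.norm_eq_abs, abs_of_pos (hωpos s),
        starRingEnd_apply, norm_star]
      exact div_le_one_of_le₀ (γ.2.2.2 s) (le_of_lt (hωpos s))
    set k : Wchar ω → E := fun γ => ⟨fun s => conj (γ.1 s) / (ω s : ℂ), hkmem γ⟩ with hk
    have hkval : ∀ (γ : Wchar ω) (s : G), (k γ : G → ℂ) s = conj (γ.1 s) / (ω s : ℂ) :=
      fun γ s => rfl
    set T : (Wchar ω →₀ ℂ) →ₗ[ℂ] E := Finsupp.linearCombination ℂ k with hT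
    set φ : (Wchar ω →₀ ℂ) →ₗ[ℂ] ℂ := Finsupp.linearCombination ℂ σ with hφ
    -- coe of finite sums in lp
    have coe_sum : ∀ {ι : Type _} (F : Finset ι) (v : ι → E) (s : G),
        ((∑ i ∈ F, v i : E) : G → ℂ) s = ∑ i ∈ F, (v i : G → ℂ) s := by
      intro ι F v s
      induction F using Finset.cons_induction with
      | empty => simp
      | cons a F ha ih =>
        rw [Finset.sum_cons, lp.coeFn_add, Pi.add_apply, ih, Finset.sum_cons]
    have hTx : ∀ (x : Wchar ω →₀ ℂ) (s : G),
        ((T x : E) : G → ℂ) s = ∑ γ ∈ x.support, x γ * (conj (γ.1 s) / (ω s : ℂ)) := by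
      intro x s
      rw [hT, Finsupp.linearCombination_apply, Finsupp.sum, coe_sum]
      refine Finset.sum_congr rfl (fun γ _ => ?_)
      rw [lp.coeFn_smul, Pi.smul_apply, hkval, smul_eq_mul]
    -- the key BSE inequality
    have key : ∀ x : Wchar ω →₀ ℂ, ‖φ x‖ ≤ C * ‖T x‖ := by
      intro x
      set n := x.support.card with hn
      set e := x.support.equivFin with he
      set γv : Fin n → Wchar ω := fun i => (e.symm i : Wchar ω) with hγv
      set cv : Fin n → ℂ := fun i => x (γv i) with hcv
      have hsum_eq : ∀ g : Wchar ω → ℂ,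
          ∑ i, cv i * g (γv i) = ∑ γ ∈ x.support, x γ * g γ := by
        intro g
        rw [← Finset.sum_coe_sort x.support (fun γ => x γ * g γ)]
        exact Equiv.sum_comp e.symm (fun a => x ↑a * g ↑a)
      have hφx : φ x = ∑ i, cv i * σ (γv i) := by
        rw [hφ, Finsupp.linearCombination_apply, Finsupp.sum, hsum_eq σ]
        exact Finset.sum_congr rfl (fun γ _ => by rw [smul_eq_mul])
      have hBapp := hC n cv γv ‖T x‖ ?_
      · rw [hφx]
        calc ‖∑ i, cv i * σ (γv i)‖ ≤ C₀ * ‖T x‖ := hBapp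
          _ ≤ C * ‖T x‖ := mul_le_mul_of_nonneg_right (le_max_left _ _) (norm_nonneg _)
      · -- verify the premise with B = ‖T x‖
        intro h hhs hh1
        have hsummand : ∀ γ : Wchar ω, Summable (fun s => h s * conj (γ.1 s)) := by
          intro γ
          apply Summable.of_norm
          refine Summable.of_nonneg_of_le (fun s => norm_nonneg _) (fun s => ?_) hhs
          rw [norm_mul, starRingEnd_apply, norm_star]
          exact mul_le_mul_of_nonneg_left (γ.2.2.2 s) (norm_nonneg _)
        rw [hsum_eq (fun γ => ∑' s, h s * conj (γ.1 s))]
        have step1 : ∀ γ : Wchar ω,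
            x γ * (∑' s, h s * conj (γ.1 s)) = ∑' s, x γ * (h s * conj (γ.1 s)) :=
          fun γ => (tsum_mul_left).symm
        rw [Finset.sum_congr rfl (fun γ _ => step1 γ)]
        rw [← Summable.tsum_finsetSum (fun γ _ => (hsummand γ).mul_left (x γ))]
        -- now the inner finite sum equals h s * (ω s * (T x) s)
        have inner_eq : ∀ s : G, (∑ γ ∈ x.support, x γ * (h s * conj (γ.1 s)))
            = h s * ((ω s : ℂ) * ((T x : E) : G → ℂ) s) := by
          intro s
          rw [hTx, Finset.mul_sum, Finset.mul_sum]
          refine Finset.sum_congr rfl (fun γ _ => ?_)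
          field_simp [hωC s]
        rw [tsum_congr inner_eq]
        -- norm bound
        have hbd : ∀ s : G, ‖h s * ((ω s : ℂ) * ((T x : E) : G → ℂ) s)‖
            ≤ (‖h s‖ * ω s) * ‖T x‖ := by
          intro s
          rw [norm_mul, norm_mul, Complex.norm_real, Real.norm_eq_abs,
            abs_of_pos (hωpos s), mul_assoc]
          refine mul_le_mul_of_nonneg_left ?_ (norm_nonneg _)
          exact mul_le_mul_of_nonneg_left (lp.norm_apply_le_norm (by norm_num) (T x) s)
            (le_of_lt (hωpos s))
        have hsumm2 : Summable (fun s => ‖h s * ((ω s : ℂ) * ((T x : E) : G → ℂ) s)‖) := by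
          refine Summable.of_nonneg_of_le (fun s => norm_nonneg _) hbd ?_
          exact hhs.mul_right _
        calc ‖∑' s, h s * ((ω s : ℂ) * ((T x : E) : G → ℂ) s)‖
            ≤ ∑' s, ‖h s * ((ω s : ℂ) * ((T x : E) : G → ℂ) s)‖ :=
              norm_tsum_le_tsum_norm hsumm2
          _ ≤ ∑' s, (‖h s‖ * ω s) * ‖T x‖ := Summable.tsum_le_tsum hbd hsumm2 (hhs.mul_right _)
          _ = (∑' s, ‖h s‖ * ω s) * ‖T x‖ := tsum_mul_right
          _ ≤ 1 * ‖T x‖ := mul_le_mul_of_nonneg_right hh1 (norm_nonneg _)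
          _ = ‖T x‖ := one_mul _
    -- factor through the range of T
    have hker : LinearMap.ker T ≤ LinearMap.ker φ := by
      intro x hx
      rw [LinearMap.mem_ker] at hx ⊢
      have := key x
      rw [hx, norm_zero, mul_zero] at this
      exact norm_le_zero_iff.mp this
    set u₀ : ↥(LinearMap.range T) →ₗ[ℂ] ℂ :=
      (Submodule.liftQ (LinearMap.ker T) φ hker).comp
        (T.quotKerEquivRange.symm : ↥(LinearMap.range T) →ₗ[ℂ] _) with hu₀def
    have hu₀ : ∀ (x : Wchar ω →₀ ℂ) (hm : T x ∈ LinearMap.range T),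
        u₀ ⟨T x, hm⟩ = φ x := by
      intro x hm
      have h1 : T.quotKerEquivRange.symm ⟨T x, hm⟩ = Submodule.Quotient.mk x := by
        rw [LinearEquiv.symm_apply_eq]
        exact Subtype.ext (T.quotKerEquivRange_apply_mk x).symm
      rw [hu₀def]
      simp only [LinearMap.comp_apply, LinearEquiv.coe_coe, h1, Submodule.liftQ_apply]
    have hu₀bound : ∀ v : ↥(LinearMap.range T), ‖u₀ v‖ ≤ C * ‖v‖ := by
      rintro ⟨w, hw⟩
      obtain ⟨x, rfl⟩ := hw
      rw [hu₀ x ⟨x, rfl⟩]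
      calc ‖φ x‖ ≤ C * ‖T x‖ := key x
        _ = C * ‖(⟨T x, ⟨x, rfl⟩⟩ : ↥(LinearMap.range T))‖ := rfl
    set u : ↥(LinearMap.range T) →L[ℂ] ℂ := LinearMap.mkContinuous u₀ C hu₀bound with hudef
    obtain ⟨L, hL, hLnorm⟩ := exists_extension_norm_eq (LinearMap.range T) u
    have hLnorm' : ‖L‖ ≤ C := by
      rw [hLnorm, hudef]
      exact LinearMap.mkContinuous_norm_le u₀ hCnn hu₀bound
    have hLk : ∀ γ : Wchar ω, L (k γ) = σ γ := by
      intro γ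
      have hTk : T (Finsupp.single γ 1) = k γ := by
        rw [hT, Finsupp.linearCombination_single, one_smul]
      have hmem : k γ ∈ LinearMap.range T := ⟨Finsupp.single γ 1, hTk⟩
      have := hL ⟨k γ, hmem⟩
      rw [this]
      have h2 : (⟨k γ, hmem⟩ : ↥(LinearMap.range T))
          = ⟨T (Finsupp.single γ 1), ⟨Finsupp.single γ 1, rfl⟩⟩ := Subtype.ext hTk.symm
      rw [hudef]
      show u₀ _ = σ γ
      rw [h2]
      exact (hu₀ (Finsupp.single γ 1) _).trans (by rw [hφ, Finsupp.linearCombination_single, one_smul])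
    -- standard basis vectors in E
    have hesmem : ∀ s : G, Memℓp (fun t => if t = s then (1:ℂ) else 0) ∞ := by
      intro s
      apply memℓp_infty
      refine ⟨1, ?_⟩
      rintro r ⟨t, rfl⟩
      by_cases h : t = s <;> simp [h]
    set esingle : G → E := fun s => ⟨fun t => if t = s then 1 else 0, hesmem s⟩ with hesingle
    have hesval : ∀ s t : G, (esingle s : G → ℂ) t = if t = s then 1 else 0 := fun s t => rfl
    set f₀ : G → ℂ := fun s => L (esingle s) with hf₀
    set f : G → ℂ := fun s => f₀ s / (ω s : ℂ) with hfdef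
    -- truncations
    have htruncmem : ∀ (c : G → ℂ) (hbd : ∀ t, ‖c t‖ ≤ 1) (F : Finset G),
        Memℓp (fun t => if t ∈ F then c t else 0) ∞ := by
      intro c hbd F
      apply memℓp_infty
      refine ⟨1, ?_⟩
      rintro r ⟨t, rfl⟩
      by_cases h : t ∈ F <;> simp [h]
      · exact hbd t
    have htrunc : ∀ (c : G → ℂ) (F : Finset G) (hm : Memℓp (fun t => if t ∈ F then c t else 0) ∞),
        (⟨fun t => if t ∈ F then c t else 0, hm⟩ : E) = ∑ s ∈ F, c s • esingle s := by
      intro c F hm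
      apply lp.ext
      funext t
      rw [coe_sum F (fun s => c s • esingle s) t]
      have : ∀ s ∈ F, ((c s • esingle s : E) : G → ℂ) t = if t = s then c s else 0 := by
        intro s _
        rw [lp.coeFn_smul, Pi.smul_apply, hesval, smul_eq_mul]
        by_cases h : t = s <;> simp [h]
      rw [Finset.sum_congr rfl this, Finset.sum_ite_eq F t c]
    have hLtrunc : ∀ (c : G → ℂ) (F : Finset G) (hm : Memℓp (fun t => if t ∈ F then c t else 0) ∞),
        L ⟨fun t => if t ∈ F then c t else 0, hm⟩ = ∑ s ∈ F, c s * f₀ s := by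
      intro c F hm
      rw [htrunc c F hm, map_sum]
      exact Finset.sum_congr rfl (fun s _ => by rw [map_smul, smul_eq_mul, hf₀])
    -- ℓ¹ bound for f
    have hnormf : ∀ s, ‖f s‖ * ω s = ‖f₀ s‖ := by
      intro s
      rw [hfdef]
      simp only [norm_div, Complex.norm_real, Real.norm_eq_abs, abs_of_pos (hωpos s)]
      exact div_mul_cancel₀ _ (ne_of_gt (hωpos s))
    have hfb : ∀ F : Finset G, ∑ s ∈ F, ‖f s‖ * ω s ≤ C := by
      intro F
      set cc : G → ℂ := fun s => if f₀ s = 0 then 1 else (‖f₀ s‖ : ℂ) / f₀ s with hccdef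
      have hcc1 : ∀ t, ‖cc t‖ ≤ 1 := by
        intro t
        rw [hccdef]
        by_cases h : f₀ t = 0
        · simp [h]
        · simp only [h, if_false, norm_div, Complex.norm_real, Real.norm_eq_abs,
            abs_norm]
          rw [div_self (by simpa using h)]
      have hccf : ∀ s, cc s * f₀ s = (‖f₀ s‖ : ℂ) := by
        intro s
        rw [hccdef]
        by_cases h : f₀ s = 0
        · simp [h]
        · simp only [h, if_false]
          field_simp
      have hm := htruncmem cc hcc1 F
      have hgnorm : ‖(⟨fun t => if t ∈ F then cc t else 0, hm⟩ : E)‖ ≤ 1 := by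
        apply lp.norm_le_of_forall_le zero_le_one
        intro t
        show ‖if t ∈ F then cc t else 0‖ ≤ 1
        by_cases h : t ∈ F <;> simp [h]
        · exact hcc1 t
      have hLg : L ⟨fun t => if t ∈ F then cc t else 0, hm⟩ = ((∑ s ∈ F, ‖f₀ s‖ : ℝ) : ℂ) := by
        rw [hLtrunc cc F hm]
        rw [Finset.sum_congr rfl (fun s _ => hccf s)]
        push_cast
        rfl
      calc ∑ s ∈ F, ‖f s‖ * ω s = ∑ s ∈ F, ‖f₀ s‖ :=
            Finset.sum_congr rfl (fun s _ => hnormf s)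
        _ = ‖((∑ s ∈ F, ‖f₀ s‖ : ℝ) : ℂ)‖ := by
            rw [Complex.norm_real, Real.norm_eq_abs]
            exact (_root_.abs_of_nonneg (Finset.sum_nonneg (fun s _ => norm_nonneg _))).symm
        _ = ‖L ⟨fun t => if t ∈ F then cc t else 0, hm⟩‖ := by rw [hLg]
        _ ≤ ‖L‖ * ‖(⟨fun t => if t ∈ F then cc t else 0, hm⟩ : E)‖ := L.le_opNorm _
        _ ≤ C * 1 := by
            refine mul_le_mul hLnorm' hgnorm (norm_nonneg _) hCnn
        _ = C := mul_one _
    have hsummf : Summable (fun s => ‖f s‖ * ω s) :=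
      summable_of_sum_le (fun s => mul_nonneg (norm_nonneg _) (le_of_lt (hωpos s))) hfb
    -- evaluation of L on "c₀" elements
    have hLtend : ∀ g : ↥E, Tendsto (fun t => ‖(g : G → ℂ) t‖) cofinite (nhds 0) →
        HasSum (fun s => (g : G → ℂ) s * f₀ s) (L g) := by
      intro g hg
      have hmF : ∀ F : Finset G, Memℓp (fun t => if t ∈ F then (g : G → ℂ) t else 0) ∞ := by
        intro F
        apply memℓp_infty
        refine ⟨‖g‖, ?_⟩
        rintro r ⟨t, rfl⟩
        show ‖if t ∈ F then (g : G → ℂ) t else 0‖ ≤ ‖g‖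
        by_cases h : t ∈ F
        · rw [if_pos h]
          exact lp.norm_apply_le_norm (by norm_num) g t
        · rw [if_neg h, norm_zero]
          exact norm_nonneg g
      have heq : ∀ F : Finset G, ∑ s ∈ F, (g : G → ℂ) s * f₀ s
          = L ⟨fun t => if t ∈ F then (g : G → ℂ) t else 0, hmF F⟩ :=
        fun F => (hLtrunc _ F (hmF F)).symm
      show Tendsto (fun F : Finset G => ∑ s ∈ F, (g : G → ℂ) s * f₀ s) atTop (nhds (L g))
      rw [funext heq]
      refine (L.continuous.tendsto g).comp ?_
      rw [Metric.tendsto_nhds]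
      intro ε hε
      have hev : ∀ᶠ t in cofinite, ‖(g : G → ℂ) t‖ < ε / 2 :=
        Filter.Tendsto.eventually_lt_const (half_pos hε) hg
      rw [Filter.eventually_cofinite] at hev
      rw [Filter.eventually_atTop]
      refine ⟨hev.toFinset, fun F hF => ?_⟩
      rw [dist_eq_norm]
      have hcoord : ∀ t : G, ‖(((⟨fun t => if t ∈ F then (g : G → ℂ) t else 0, hmF F⟩ : ↥E)
          - g : ↥E) : G → ℂ) t‖ ≤ ε / 2 := by
        intro t
        rw [lp.coeFn_sub, Pi.sub_apply]
        show ‖(if t ∈ F then (g : G → ℂ) t else 0) - (g : G → ℂ) t‖ ≤ ε / 2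
        by_cases h : t ∈ F
        · rw [if_pos h, sub_self, norm_zero]
          exact le_of_lt (half_pos hε)
        · rw [if_neg h, zero_sub, norm_neg]
          have h2 : t ∉ hev.toFinset := fun hc => h (hF hc)
          rw [Set.Finite.mem_toFinset] at h2
          simp only [Set.mem_setOf_eq, not_not] at h2
          exact le_of_lt h2
      calc ‖(⟨fun t => if t ∈ F then (g : G → ℂ) t else 0, hmF F⟩ : ↥E) - g‖ ≤ ε / 2 :=
            lp.norm_le_of_forall_le (le_of_lt (half_pos hε)) hcoord
        _ < ε := by linarith
    -- evaluation on interior characters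
    have hinterior : ∀ γ : Wchar ω, Tendsto (fun t => ‖γ.1 t‖ / ω t) cofinite (nhds 0) →
        σ γ = ∑' s, f s * conj (γ.1 s) := by
      intro γ hγt
      have h1 : Tendsto (fun t => ‖(k γ : G → ℂ) t‖) cofinite (nhds 0) := by
        have : ∀ t, ‖(k γ : G → ℂ) t‖ = ‖γ.1 t‖ / ω t := by
          intro t
          rw [hkval, norm_div, Complex.norm_real, Real.norm_eq_abs, abs_of_pos (hωpos t),
            starRingEnd_apply, norm_star]
        rw [funext this]
        exact hγt
      have h2 := hLtend (k γ) h1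
      rw [hLk γ] at h2
      have h3 : (fun s => (k γ : G → ℂ) s * f₀ s) = fun s => f s * conj (γ.1 s) := by
        funext s
        rw [hkval, hfdef]
        field_simp
      rw [h3] at h2
      exact h2.tsum_eq.symm
    -- conclusion
    refine ⟨f, hsummf, ?_⟩
    intro γ
    have hbase : ∀ s : G, (0:ℝ) < ‖γ.1 s‖ := fun s => norm_pos_iff.mpr (γ.2.1 s)
    set θ : ℕ → ℝ := fun n => -(1 / ((n:ℝ) + 1)) with hθdef
    have hθneg : ∀ n, θ n < 0 := by
      intro n
      rw [hθdef]
      simp only [neg_neg, neg_lt_zero]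
      positivity
    have hθge : ∀ n, (0:ℝ) ≤ 1 + θ n := by
      intro n
      rw [hθdef]
      have h1 : 1 / ((n:ℝ) + 1) ≤ 1 := by
        rw [div_le_one (by positivity)]
        simp
      linarith
    have hθ0 : Tendsto θ atTop (nhds 0) := by
      rw [hθdef]
      have := tendsto_one_div_add_atTop_nhds_zero_nat (𝕜 := ℝ)
      simpa using this.neg
    set Γfun : ℕ → G → ℂ := fun n s => ((‖γ.1 s‖ ^ θ n : ℝ) : ℂ) * γ.1 s with hΓfun
    have hΓnorm : ∀ n s, ‖Γfun n s‖ = ‖γ.1 s‖ ^ (1 + θ n) := by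
      intro n s
      rw [hΓfun]
      rw [norm_mul, Complex.norm_real, Real.norm_eq_abs,
        abs_of_pos (Real.rpow_pos_of_pos (hbase s) _)]
      rw [add_comm, Real.rpow_add (hbase s), Real.rpow_one]
    have hΓbound : ∀ n s, ‖Γfun n s‖ ≤ ω s := by
      intro n s
      rw [hΓnorm]
      by_cases h : ‖γ.1 s‖ ≤ 1
      · calc ‖γ.1 s‖ ^ (1 + θ n) ≤ 1 := Real.rpow_le_one (norm_nonneg _) h (hθge n)
          _ ≤ ω s := hω1 s
      · push_neg at h
        calc ‖γ.1 s‖ ^ (1 + θ n) ≤ ‖γ.1 s‖ ^ (1:ℝ) :=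
              Real.rpow_le_rpow_of_exponent_le (le_of_lt h) (by linarith [hθneg n])
          _ = ‖γ.1 s‖ := Real.rpow_one _
          _ ≤ ω s := γ.2.2.2 s
    have hΓne : ∀ n s, Γfun n s ≠ 0 := by
      intro n s
      rw [hΓfun]
      exact mul_ne_zero (Complex.ofReal_ne_zero.mpr
        (ne_of_gt (Real.rpow_pos_of_pos (hbase s) _))) (γ.2.1 s)
    have hΓmul : ∀ n s t, Γfun n (s + t) = Γfun n s * Γfun n t := by
      intro n s t
      show ((‖γ.1 (s+t)‖ ^ θ n : ℝ) : ℂ) * γ.1 (s+t) = _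
      rw [γ.2.2.1 s t, norm_mul, Real.mul_rpow (norm_nonneg _) (norm_nonneg _)]
      push_cast
      ring
    set Γ : ℕ → Wchar ω := fun n =>
      ⟨Γfun n, hΓne n, hΓmul n, fun s => hΓbound n s⟩ with hΓ
    -- interior property
    have hint : ∀ n, Tendsto (fun t => ‖(Γ n).1 t‖ / ω t) cofinite (nhds 0) := by
      intro n
      have hle : ∀ t, ‖(Γ n).1 t‖ / ω t ≤ ((ω t)⁻¹) ^ (-(θ n)) := by
        intro t
        have h1 : ‖(Γ n).1 t‖ ≤ (ω t) ^ (1 + θ n) := by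
          show ‖Γfun n t‖ ≤ _
          rw [hΓnorm]
          exact Real.rpow_le_rpow (norm_nonneg _) (γ.2.2.2 t) (hθge n)
        have h2 : (ω t) ^ (1 + θ n) / ω t = (ω t) ^ (θ n) := by
          rw [Real.rpow_add (hωpos t), Real.rpow_one, mul_comm, mul_div_assoc,
            div_self (ne_of_gt (hωpos t)), mul_one]
        have h3 : ((ω t)⁻¹) ^ (-(θ n)) = (ω t) ^ (θ n) := by
          rw [Real.inv_rpow (le_of_lt (hωpos t)), Real.rpow_neg (le_of_lt (hωpos t)), inv_inv]
        rw [h3, ← h2]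
        gcongr
        all_goals first | exact h1 | exact le_of_lt (hωpos t) | positivity
      have htd : Tendsto (fun t => ((ω t)⁻¹) ^ (-(θ n))) cofinite (nhds 0) := by
        have hc : ContinuousAt (fun x : ℝ => x ^ (-(θ n))) 0 :=
          Real.continuousAt_rpow_const 0 _ (Or.inr (by linarith [hθneg n]))
        have h4 := hc.tendsto.comp hω0
        rw [Function.comp_def] at h4
        rwa [Real.zero_rpow (ne_of_gt (by linarith [hθneg n] : (0:ℝ) < -(θ n)))] at h4
      exact squeeze_zero (fun t => div_nonneg (norm_nonneg _) (le_of_lt (hωpos t))) hle htd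
    -- coordinatewise convergence Γ n → γ
    have hΓcoord : ∀ s, Tendsto (fun n => Γfun n s) atTop (nhds (γ.1 s)) := by
      intro s
      have hb : ContinuousAt (fun x : ℝ => ‖γ.1 s‖ ^ x) 0 :=
        Real.continuousAt_const_rpow (ne_of_gt (hbase s))
      have h1 : Tendsto (fun n => (‖γ.1 s‖ ^ θ n : ℝ)) atTop (nhds 1) := by
        have h5 := hb.tendsto.comp hθ0
        rw [Function.comp_def] at h5
        rwa [Real.rpow_zero] at h5
      have h2 : Tendsto (fun n => ((‖γ.1 s‖ ^ θ n : ℝ) : ℂ)) atTop (nhds 1) := by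
        have h6 := (Complex.continuous_ofReal.tendsto 1).comp h1
        rw [Function.comp_def] at h6
        simpa using h6
      have h7 := h2.mul_const (γ.1 s)
      rw [one_mul] at h7
      exact h7
    have hΓtend : Tendsto Γ atTop (nhds γ) := by
      rw [tendsto_subtype_rng, tendsto_pi_nhds]
      exact fun s => hΓcoord s
    have hlim1 : Tendsto (fun n => σ (Γ n)) atTop (nhds (σ γ)) :=
      (hcont.tendsto γ).comp hΓtend
    have heval : ∀ n, σ (Γ n) = ∑' s, f s * conj ((Γ n).1 s) :=
      fun n => hinterior (Γ n) (hint n)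
    have hlim2 : Tendsto (fun n => ∑' s, f s * conj ((Γ n).1 s)) atTop
        (nhds (∑' s, f s * conj (γ.1 s))) := by
      refine tendsto_tsum_of_dominated_convergence hsummf (fun s => ?_) ?_
      · exact ((continuous_star.tendsto (γ.1 s)).comp (hΓcoord s)).const_mul (f s)
      · refine Filter.Eventually.of_forall (fun n s => ?_)
        rw [norm_mul, starRingEnd_apply, norm_star]
        exact mul_le_mul_of_nonneg_left (hΓbound n s) (norm_nonneg _)
    rw [funext heval] at hlim1
    exact tendsto_nhds_unique hlim1 hlim2
  · rintro ⟨f, hf, hσ⟩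
    haveI hcs : CompactSpace {γ : G → ℂ // (∀ s, γ s ≠ 0) ∧ (∀ s t, γ (s + t) = γ s * γ t) ∧
          ∀ s, ‖γ s‖ ≤ ω s} := isCompact_iff_compactSpace.mp (specw_isCompact ω)
    -- basic bound on terms
    have hterm : ∀ (γ : Wchar ω) (s : G), ‖f s * conj (γ.1 s)‖ ≤ ‖f s‖ * ω s := by
      intro γ s
      rw [norm_mul, starRingEnd_apply, norm_star]
      exact mul_le_mul_of_nonneg_left (γ.2.2.2 s) (norm_nonneg _)
    have hnorm : ∀ γ : Wchar ω, Summable (fun s => ‖f s * conj (γ.1 s)‖) := by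
      intro γ
      exact Summable.of_nonneg_of_le (fun s => norm_nonneg _) (fun s => hterm γ s) hf
    have hfs : ∀ γ : Wchar ω, Summable (fun s => f s * conj (γ.1 s)) := fun γ => (hnorm γ).of_norm
    refine ⟨?_, ?_, ?_, ?_⟩
    · -- continuity
      have : σ = fun γ : Wchar ω => ∑' s, f s * conj (γ.1 s) := funext hσ
      rw [this]
      refine continuous_tsum (fun s => ?_) hf (fun s γ => hterm γ s)
      simp only [starRingEnd_apply]
      exact continuous_const.mul (((continuous_apply s).comp continuous_subtype_val).star)
    · -- bounded
      refine ⟨∑' s, ‖f s‖ * ω s, fun γ => ?_⟩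
      rw [hσ γ]
      calc ‖∑' s, f s * conj (γ.1 s)‖ ≤ ∑' s, ‖f s * conj (γ.1 s)‖ :=
            norm_tsum_le_tsum_norm (hnorm γ)
        _ ≤ ∑' s, ‖f s‖ * ω s := by
            exact Summable.tsum_le_tsum (fun s => hterm γ s) (hnorm γ) hf
    · -- BSE clause
      refine ⟨(∑' s, ‖f s‖ * ω s) + 1, ?_⟩
      intro n c γ B hB
      have hBnn : 0 ≤ B := by
        have := hB 0 (by simpa using summable_zero) (by simp)
        simpa using this
      set S : ℝ := ∑' s, ‖f s‖ * ω s with hS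
      have hSnn : 0 ≤ S := tsum_nonneg (fun s => mul_nonneg (norm_nonneg _)
        (le_trans zero_le_one (hω1 s)))
      rcases eq_or_lt_of_le hSnn with hS0 | hSpos
      · -- S = 0 : f = 0, σ = 0
        have hf0 : ∀ s, f s = 0 := by
          intro s
          have hle : ‖f s‖ * ω s ≤ S := Summable.le_tsum hf s
            (fun t _ => mul_nonneg (norm_nonneg _) (le_trans zero_le_one (hω1 t)))
          rw [← hS0] at hle
          have hωpos : (0:ℝ) < ω s := lt_of_lt_of_le one_pos (hω1 s)
          have : ‖f s‖ ≤ 0 := by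
            by_contra hc
            push_neg at hc
            nlinarith
          simpa using le_antisymm this (norm_nonneg _)
        have hσ0 : ∀ γ', σ γ' = 0 := by
          intro γ'
          rw [hσ γ']
          simp [hf0]
        simp only [hσ0, mul_zero, Finset.sum_const_zero, norm_zero]
        positivity
      · -- S > 0
        set hcomplex : G → ℂ := fun s => f s / (S : ℂ) with hhc
        have hnormdiv : ∀ s, ‖hcomplex s‖ = ‖f s‖ / S := by
          intro s
          rw [hhc]
          simp [norm_div, Complex.norm_real, Real.norm_eq_abs, abs_of_pos hSpos]
        have hsum2 : Summable (fun s => ‖hcomplex s‖ * ω s) := by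
          have : (fun s => ‖hcomplex s‖ * ω s) = fun s => (‖f s‖ * ω s) / S := by
            funext s; rw [hnormdiv]; ring
          rw [this]
          exact hf.div_const S
        have htsum1 : (∑' s, ‖hcomplex s‖ * ω s) ≤ 1 := by
          have : (fun s => ‖hcomplex s‖ * ω s) = fun s => (‖f s‖ * ω s) / S := by
            funext s; rw [hnormdiv]; ring
          rw [this, tsum_div_const, ← hS, div_self (ne_of_gt hSpos)]
        have hkey := hB hcomplex hsum2 htsum1
        have hrw : ∀ i, (∑' s, hcomplex s * conj ((γ i).1 s)) = σ (γ i) / (S:ℂ) := by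
          intro i
          rw [hσ (γ i)]
          rw [← tsum_div_const]
          congr 1
          funext s
          rw [hhc]
          ring
        rw [show (∑ i, c i * ∑' s, hcomplex s * conj ((γ i).1 s))
            = (∑ i, c i * σ (γ i)) / (S:ℂ) by
          rw [Finset.sum_div]
          exact Finset.sum_congr rfl (fun i _ => by rw [hrw i]; ring)] at hkey
        rw [norm_div, Complex.norm_real, Real.norm_eq_abs, abs_of_pos hSpos,
          div_le_iff₀ hSpos] at hkey
        calc ‖∑ i, c i * σ (γ i)‖ ≤ B * S := hkey
          _ ≤ (S + 1) * B := by nlinarith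

    · -- eps clause
      intro ε hε
      refine ⟨Set.univ, isCompact_univ, ?_⟩
      intro n c γ hγ _
      match n with
      | 0 => simpa using hε.le
      | Nat.succ m => exact absurd (Set.mem_univ (γ 0)) (hγ 0)
end

section
/- Let 𝒜 be a commutative semisimple Banach algebra with a bounded approximate identity, and let T be a multiplier of 𝒜 with associated bounded continuous function T̂ on the Gelfand spectrum Φ_𝒜 satisfying (Ta)^ = T̂ · â. Then T̂ is a BSE-function: there is a constant C (e.g., the bound of the approximate identity times ‖T‖) such that |Σᵢ cᵢ T̂(φᵢ)| ≤ C‖Σᵢ cᵢφᵢ‖_{𝒜*} for all finite combinations of elements of Φ_𝒜. -/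
open WeakDual

/-- Let `𝒜` be a commutative semisimple Banach algebra with a bounded
approximate identity, and let `T` be a multiplier of `𝒜` with associated bounded
continuous function `T̂` on the Gelfand spectrum satisfying `(Ta)^ = T̂·â`.  Then `T̂`
is a BSE-function: there is `C` with `|Σ cᵢ T̂(φᵢ)| ≤ C ‖Σ cᵢ φᵢ‖_{𝒜*}` for all finite
combinations of characters (the dual norm being expressed via upper bounds `B` over the
unit ball of `𝒜`). -/
theorem multiplier_transform_is_BSE
    {A : Type*} [NormedCommRing A] [NormedAlgebra ℂ A]
    -- 𝒜 is semisimple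
    (hss : ∀ a : A, (∀ φ : characterSpace ℂ A, φ a = 0) → a = 0)
    -- 𝒜 has a bounded approximate identity with bound D
    (D : ℝ) (hD : 0 < D)
    (hbai : ∀ ε > (0 : ℝ), ∀ S : Finset A, ∃ e : A, ‖e‖ ≤ D ∧
      ∀ a ∈ S, ‖a * e - a‖ < ε)
    -- T is a multiplier of 𝒜
    (T : A →L[ℂ] A) (hT : ∀ a b : A, T (a * b) = T a * b)
    -- T̂ is the associated bounded continuous function on the spectrum
    (That : characterSpace ℂ A → ℂ) (hThatc : Continuous That)
    (hThatbdd : ∃ M : ℝ, ∀ φ, ‖That φ‖ ≤ M)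
    (hThat : ∀ (φ : characterSpace ℂ A) (a : A), φ (T a) = That φ * φ a) :
    ∃ C : ℝ, ∀ (n : ℕ) (c : Fin n → ℂ) (φ : Fin n → characterSpace ℂ A),
      ∀ B : ℝ,
        (∀ a : A, ‖a‖ ≤ 1 → ‖∑ i, c i * φ i a‖ ≤ B) →
        ‖∑ i, c i * That (φ i)‖ ≤ C * B := by

  obtain ⟨M, hM⟩ := hThatbdd
  refine ⟨D * ‖T‖, fun n c φ B hB => ?_⟩
  -- B is nonnegative
  have hB0 : 0 ≤ B := by
    have h0 := hB 0 (by simp)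
    simpa using h0
  -- bound on each character as a linear functional
  set K : Fin n → ℝ := fun i => ‖WeakDual.toStrongDual (φ i : WeakDual ℂ A)‖ with hK
  have hKbd : ∀ i (a : A), ‖(φ i) a‖ ≤ K i * ‖a‖ := fun i a =>
    ContinuousLinearMap.le_opNorm (WeakDual.toStrongDual (φ i : WeakDual ℂ A)) a
  -- Step A: for any e with ‖e‖ ≤ D, ‖∑ cᵢ φᵢ(T e)‖ ≤ D * ‖T‖ * B
  have stepA : ∀ e : A, ‖e‖ ≤ D → ‖∑ i, c i * (φ i) (T e)‖ ≤ D * ‖T‖ * B := by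
    intro e he
    by_cases hTe : T e = 0
    · simp only [hTe, map_zero, mul_zero, Finset.sum_const_zero, norm_zero]
      positivity
    · have hTe' : (0:ℝ) < ‖T e‖ := norm_pos_iff.mpr hTe
      set a : A := ((‖T e‖ : ℂ))⁻¹ • T e with ha
      have hna : ‖a‖ ≤ 1 := by
        rw [ha, norm_smul]
        simp [norm_inv, inv_mul_cancel₀ (ne_of_gt hTe')]
      have h1 := hB a hna
      have h2 : ∑ i, c i * (φ i) a = ((‖T e‖ : ℂ))⁻¹ * ∑ i, c i * (φ i) (T e) := by
        rw [Finset.mul_sum]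
        refine Finset.sum_congr rfl fun i _ => ?_
        rw [ha, map_smul]
        ring_nf
      rw [h2, norm_mul, norm_inv] at h1
      have h3 : ‖∑ i, c i * (φ i) (T e)‖ ≤ ‖T e‖ * B := by
        have := mul_le_mul_of_nonneg_left h1 (le_of_lt hTe')
        rw [← mul_assoc, Complex.norm_real, norm_norm,
          mul_inv_cancel₀ (ne_of_gt hTe'), one_mul] at this
        exact this
      refine h3.trans ?_
      have hTnorm : ‖T e‖ ≤ ‖T‖ * D := by
        calc ‖T e‖ ≤ ‖T‖ * ‖e‖ := T.le_opNorm e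
        _ ≤ ‖T‖ * D := by
            exact mul_le_mul_of_nonneg_left he (norm_nonneg T)
      calc ‖T e‖ * B ≤ (‖T‖ * D) * B := mul_le_mul_of_nonneg_right hTnorm hB0
      _ = D * ‖T‖ * B := by ring
  -- conclude by an ε-argument
  refine le_of_forall_pos_le_add fun ε hε => ?_
  set L : ℝ := ∑ i, ‖c i‖ * M * K i with hL
  have hL0 : 0 ≤ L := by
    refine Finset.sum_nonneg fun i _ => ?_
    have hM0 : 0 ≤ M := le_trans (norm_nonneg (That (φ i))) (hM (φ i))
    positivity
  set δ : ℝ := ε / (L + 1) with hδ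
  have hδ0 : 0 < δ := div_pos hε (by linarith)
  obtain ⟨e, he, hee⟩ := hbai δ hδ0 {1}
  have h1e : ‖e - 1‖ < δ := by
    have := hee 1 (Finset.mem_singleton_self 1)
    simpa using this
  have hφe : ∀ i, ‖(1:ℂ) - (φ i) e‖ ≤ K i * δ := by
    intro i
    have h1 : (φ i) (e - 1) = (φ i) e - 1 := by
      rw [map_sub]
      congr 1
      exact map_one (φ i)
    have h2 : ‖(φ i) (e - 1)‖ ≤ K i * ‖e - 1‖ := hKbd i _
    rw [h1] at h2
    rw [← norm_neg, neg_sub]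
    refine h2.trans ?_
    have hK0 : 0 ≤ K i := norm_nonneg _
    exact mul_le_mul_of_nonneg_left (le_of_lt h1e) hK0
  -- main estimate
  have key : ∑ i, c i * (φ i) (T e) = ∑ i, c i * That (φ i) * (φ i) e := by
    refine Finset.sum_congr rfl fun i _ => ?_
    rw [hThat (φ i) e]; ring
  have split : ∑ i, c i * That (φ i)
      = (∑ i, c i * That (φ i) * (φ i) e) + ∑ i, c i * That (φ i) * (1 - (φ i) e) := by
    rw [← Finset.sum_add_distrib]
    refine Finset.sum_congr rfl fun i _ => ?_
    ring
  have herr : ‖∑ i, c i * That (φ i) * (1 - (φ i) e)‖ ≤ L * δ := by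
    calc ‖∑ i, c i * That (φ i) * (1 - (φ i) e)‖
        ≤ ∑ i, ‖c i * That (φ i) * (1 - (φ i) e)‖ := norm_sum_le _ _
      _ ≤ ∑ i, ‖c i‖ * M * (K i * δ) := by
          refine Finset.sum_le_sum fun i _ => ?_
          rw [norm_mul, norm_mul]
          have hM0 : 0 ≤ M := le_trans (norm_nonneg (That (φ i))) (hM (φ i))
          refine mul_le_mul (mul_le_mul_of_nonneg_left (hM (φ i)) (norm_nonneg _))
            (hφe i) (norm_nonneg _) (by positivity)
      _ = L * δ := by rw [hL, Finset.sum_mul]; exact Finset.sum_congr rfl fun i _ => by ring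
  have hLδ : L * δ ≤ ε := by
    rw [hδ]
    rw [div_eq_mul_inv, ← mul_assoc]
    rw [mul_comm L ε, mul_assoc]
    nth_rewrite 2 [← mul_one ε]
    refine mul_le_mul_of_nonneg_left ?_ (le_of_lt hε)
    rw [mul_inv_le_iff₀ (by linarith : (0:ℝ) < L + 1)]
    linarith
  calc ‖∑ i, c i * That (φ i)‖
      ≤ ‖∑ i, c i * That (φ i) * (φ i) e‖ + ‖∑ i, c i * That (φ i) * (1 - (φ i) e)‖ := by
        rw [split]; exact norm_add_le _ _
    _ ≤ D * ‖T‖ * B + L * δ := by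
        refine add_le_add ?_ herr
        rw [← key]; exact stepA e he
    _ ≤ D * ‖T‖ * B + ε := by linarith
end
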